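/- Domain wall boundary conditions evaluation as a consequence of the two determinant results: for n×n matrices, ∏ᵢ₌₁ⁿ(xᵢ+yᵢ) · ∏_{i<j}((xᵢ+yⱼ)/(xᵢ−xⱼ)) · det( ∏_{k=1}^{n−j}(xᵢ−a_k) / ∏_{k=1}^{n−j+1}(1−b_k xᵢ) ) · ∏_{i=1}^n ∏_{j=1}^n (1−bⱼxᵢ) = ∏ᵢ₌₁ⁿ(xᵢ+yᵢ) · ∏_{1≤i<j≤n}(xᵢ+yⱼ)(1−aᵢbⱼ). -/

import Mathlib

/-!
Multiplying row `i` by `∏_{k=1}^n (1 - b_k x_i)` clears the denominators: the column with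
numerator `∏_{k≤m} (x - a_k)` becomes `∏_{k≤m} (x - a_k) · ∏_{k=m+2}^n (1 - b_k x)`.
Since `(1 - b x) + b (x - a) = 1 - a b`, adding `b_{m+p+2}` times column `m + 1` to column `m`,
for all `m` at once (a unitriangular change of columns), turns the factor `1 - b_{m+p+2} x` into
the constant `1 - a_{m+1} b_{m+p+2}`. After `n` such passes no `b` is left, the constants
collected are `∏_{i<j} (1 - a_i b_j)`, and the remaining Newton-basis Vandermonde determinant
`det (∏_{k≤j} (x_i - a_k))` equals `∏_{i<j} (x_j - x_i)`.
-/

open Finset Matrix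

theorem det_add_mul_succ_col {R : Type*} [CommRing R] {n : ℕ} (f : Fin n → ℕ → R)
    (c : ℕ → R) (hc : c (n - 1) = 0) :
    (of fun i (j : Fin n) => f i j + c j * f i (j + 1)).det =
      (of fun i (j : Fin n) => f i j).det := by
  set L : Matrix (Fin n) (Fin n) R :=
    of fun k j => if (k : ℕ) = j then 1 else if (k : ℕ) = j + 1 then c j else 0
  have hL : L.det = 1 := by
    rw [det_of_isLowerTriangular L fun k j (hkj : k < j) => ?_]
    · simp [L]
    · have : (k : ℕ) < j := hkj
      simp only [L, of_apply]
      rw [if_neg (by omega), if_neg (by omega)]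
  suffices of (fun i (j : Fin n) => f i j + c j * f i (j + 1)) =
      of (fun i (j : Fin n) => f i j) * L by
    rw [this, det_mul, hL, mul_one]
  ext i j
  have hsummand (k : ℕ) : f i k * (if k = j then 1 else if k = j + 1 then c j else 0) =
      (if k = j then f i j else 0) + (if k = j + 1 then c j * f i (j + 1) else 0) := by
    split_ifs <;> first | omega | subst_vars; ring
  simp only [of_apply, mul_apply, L]
  rw [Fin.sum_univ_eq_sum_range
      (fun k : ℕ => f i k * (if k = j then 1 else if k = j + 1 then c j else 0)) n,
    sum_congr rfl fun k _ => hsummand k, sum_add_distrib, sum_ite_eq', sum_ite_eq']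
  simp only [mem_range, j.isLt, if_true]
  split_ifs
  · rfl
  · rw [show (j : ℕ) = n - 1 by omega, hc, zero_mul, add_zero]

theorem prod_filter_lt_eq_prod_Ioi {α M : Type*} [Fintype α] [LinearOrder α]
    [LocallyFiniteOrderTop α] [CommMonoid M] (f : α × α → M) :
    ∏ p ∈ univ.filter (fun p : α × α => p.1 < p.2), f p =
      ∏ i, ∏ j ∈ Ioi i, f (i, j) := by
  rw [prod_filter, Fintype.prod_prod_type]
  refine prod_congr rfl fun i _ => ?_
  rw [← prod_filter, filter_lt_eq_Ioi]

theorem prod_filter_lt_rev {M : Type*} [CommMonoid M] {n : ℕ} (f : Fin n → Fin n → M) :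
    ∏ p ∈ univ.filter (fun p : Fin n × Fin n => p.1 < p.2), f p.2.rev p.1.rev =
      ∏ p ∈ univ.filter (fun p : Fin n × Fin n => p.1 < p.2), f p.1 p.2 := by
  refine prod_nbij' (fun p => (p.2.rev, p.1.rev)) (fun p => (p.2.rev, p.1.rev))
    ?_ ?_ ?_ ?_ ?_ <;> simp [Fin.rev_lt_rev]

theorem prod_range_ite_eq_prod_Ioi {M : Type*} [CommMonoid M] {n : ℕ} (i : Fin n)
    (f : ℕ → M) :
    ∏ p ∈ range n, (if i + p + 2 ≤ n then f (i + p + 1) else 1) = ∏ j ∈ Ioi i, f j := by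
  have hfilter : {p ∈ range n | i + p + 2 ≤ n} = range (n - (i + 1)) := by
    ext p; simp only [mem_filter, mem_range]; omega
  have hIoi : ∏ j ∈ Ioi i, f j = ∏ j ∈ Ico ((i : ℕ) + 1) n, f j := by
    rw [Ico_add_one_left_eq_Ioo, ← Fin.map_valEmbedding_Ioi, prod_map]
    rfl
  rw [← prod_filter, hfilter, hIoi, prod_Ico_eq_prod_range]
  simp only [add_right_comm]

theorem prod_fin_add_one_eq_prod_Icc {M : Type*} [CommMonoid M] (n : ℕ) (f : ℕ → M) :
    ∏ j : Fin n, f (j + 1) = ∏ k ∈ Icc 1 n, f k := by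
  rw [Fin.prod_univ_eq_prod_range (fun j => f (j + 1)), range_eq_Ico, prod_Ico_add',
    Ico_add_one_right_eq_Icc]

open Polynomial in
theorem det_prod_sub_eq_det_vandermonde {R : Type*} [CommRing R] {n : ℕ} (a : ℕ → R)
    (v : Fin n → R) :
    (of fun i (j : Fin n) => ∏ k ∈ Icc 1 (j : ℕ), (v i - a k)).det = (vandermonde v).det := by
  nontriviality R
  have hmonic (j : Fin n) : (∏ k ∈ Icc 1 (j : ℕ), (X - C (a k))).Monic :=
    monic_prod_of_monic _ _ fun k _ => monic_X_sub_C (a k)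
  rw [det_eval_matrixOfPolynomials_eq_det_vandermonde v _ (fun j => ?_) hmonic]
  · simp [eval_prod]
  · rw [natDegree_prod_of_monic _ _ fun k _ => monic_X_sub_C (a k)]
    simp

section DomainWall

variable {R : Type*} [CommRing R] (a b : ℕ → R) (n : ℕ)

/-- Column `m` after `p` passes of column operations. The matrix of the theorem lists its
columns in the opposite order: its column `j` is column `m = n - 1 - j` here. -/
def domainWallColumn (p m : ℕ) (t : R) : R :=
  (∏ k ∈ Icc 1 m, (t - a k)) * ∏ k ∈ Icc (m + p + 2) n, (1 - b k * t)

theorem domainWallColumn_add_mul_succ (p m : ℕ) (t : R) :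
    domainWallColumn a b n p m t +
        (if m + p + 2 ≤ n then b (m + p + 2) else 0) * domainWallColumn a b n p (m + 1) t =
      (if m + p + 2 ≤ n then 1 - a (m + 1) * b (m + p + 2) else 1) *
        domainWallColumn a b n (p + 1) m t := by
  unfold domainWallColumn
  rw [prod_Icc_succ_top (by omega), show m + 1 + p + 2 = m + p + 2 + 1 by omega,
    show m + (p + 1) + 2 = m + p + 2 + 1 by omega]
  split_ifs with h
  · rw [← insert_Icc_add_one_left_eq_Icc h, prod_insert (by simp)]
    ring
  · rw [Icc_eq_empty_of_lt (show n < m + p + 2 by omega),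
      Icc_eq_empty_of_lt (show n < m + p + 2 + 1 by omega)]
    ring

theorem domainWallColumn_of_le {p : ℕ} (hp : n ≤ p) (m : ℕ) (t : R) :
    domainWallColumn a b n p m t = ∏ k ∈ Icc 1 m, (t - a k) := by
  rw [domainWallColumn, Icc_eq_empty_of_lt (show n < m + p + 2 by omega), prod_empty, mul_one]

variable {n}

theorem det_domainWallColumn_succ (v : Fin n → R) (p : ℕ) :
    (of fun i (j : Fin n) => domainWallColumn a b n p j (v i)).det =
      (∏ j : Fin n, if j + p + 2 ≤ n then 1 - a (j + 1) * b (j + p + 2) else 1) *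
        (of fun i (j : Fin n) => domainWallColumn a b n (p + 1) j (v i)).det := by
  rw [← det_add_mul_succ_col (fun i m => domainWallColumn a b n p m (v i))
    (fun m => if m + p + 2 ≤ n then b (m + p + 2) else 0) (if_neg (by omega)), ← det_mul_row]
  simp only [domainWallColumn_add_mul_succ, of_apply]

theorem det_domainWallColumn_eq_prod_mul_det (v : Fin n → R) (N : ℕ) :
    (of fun i (j : Fin n) => domainWallColumn a b n 0 j (v i)).det =
      (∏ p ∈ range N, ∏ j : Fin n,
          if j + p + 2 ≤ n then 1 - a (j + 1) * b (j + p + 2) else 1) *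
        (of fun i (j : Fin n) => domainWallColumn a b n N j (v i)).det := by
  induction N with
  | zero => simp
  | succ N ih => rw [ih, det_domainWallColumn_succ, prod_range_succ, mul_assoc]

theorem det_domainWallColumn (v : Fin n → R) :
    (of fun i (j : Fin n) => domainWallColumn a b n 0 j (v i)).det =
      (∏ i : Fin n, ∏ j ∈ Ioi i, (1 - a (i + 1) * b (j + 1))) *
        ∏ i : Fin n, ∏ j ∈ Ioi i, (v j - v i) := by
  rw [det_domainWallColumn_eq_prod_mul_det a b v n]
  simp only [domainWallColumn_of_le a b n le_rfl, det_prod_sub_eq_det_vandermonde,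
    det_vandermonde, prod_comm (s := range n)]
  congr 1
  exact prod_congr rfl fun i _ => prod_range_ite_eq_prod_Ioi i fun j => 1 - a (i + 1) * b (j + 1)

theorem det_domainWallColumn_rev (v : Fin n → R) :
    (of fun i (j : Fin n) => domainWallColumn a b n 0 j.rev (v i)).det =
      (∏ p ∈ univ.filter (fun p : Fin n × Fin n => p.1 < p.2),
          (1 - a (p.1 + 1) * b (p.2 + 1))) *
        ∏ p ∈ univ.filter (fun p : Fin n × Fin n => p.1 < p.2), (v p.1 - v p.2) := by
  rw [← det_submatrix_equiv_self Fin.revPerm]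
  simp only [submatrix, of_apply, Fin.revPerm_apply, Fin.rev_rev]
  rw [det_domainWallColumn, ← prod_filter_lt_rev fun i j => v i - v j]
  simp only [prod_filter_lt_eq_prod_Ioi]

end DomainWall

theorem div_mul_prod_eq_domainWallColumn {K : Type*} [Field K] (a b : ℕ → K) {n m : ℕ}
    (hm : m < n) {t : K} (ht : ∀ k ∈ Icc 1 n, 1 - b k * t ≠ 0) :
    (∏ k ∈ Icc 1 m, (t - a k)) / (∏ k ∈ Icc 1 (m + 1), (1 - b k * t)) *
      ∏ k ∈ Icc 1 n, (1 - b k * t) = domainWallColumn a b n 0 m t := by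
  have hsplit : ∏ k ∈ Icc 1 n, (1 - b k * t) =
      (∏ k ∈ Icc 1 (m + 1), (1 - b k * t)) * ∏ k ∈ Icc (m + 0 + 2) n, (1 - b k * t) := by
    have hIcc (k : ℕ) : Icc 1 k = Ioc 0 k := Icc_add_one_left_eq_Ioc 0 k
    rw [hIcc, hIcc, ← prod_Ioc_consecutive _ (Nat.zero_le (m + 1)) hm,
      ← Icc_add_one_left_eq_Ioc (m + 1) n]
    rfl
  have hne : ∏ k ∈ Icc 1 (m + 1), (1 - b k * t) ≠ 0 :=
    prod_ne_zero_iff.mpr fun k hk => ht k (Icc_subset_Icc_right (by omega) hk)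
  rw [hsplit, div_mul_eq_mul_div, mul_div_assoc, mul_div_cancel_left₀ _ hne]
  rfl

/-- Domain wall boundary conditions evaluation, as a consequence of the two determinant
results: `∏ᵢ(xᵢ+yᵢ) ∏_{i<j}((xᵢ+yⱼ)/(xᵢ−xⱼ)) · det(...) · ∏_{i,j}(1−bⱼxᵢ)
 = ∏ᵢ(xᵢ+yᵢ) ∏_{i<j}(xᵢ+yⱼ)(1−aᵢbⱼ)`. -/
theorem domain_wall_evaluation {F : Type*} [Field F] (n : ℕ) (x y : Fin n → F)
    (a b : ℕ → F)
    (hx : ∀ i j : Fin n, i ≠ j → x i ≠ x j)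
    (hb : ∀ (i : Fin n), ∀ k ∈ Finset.Icc 1 n, 1 - b k * x i ≠ 0) :
    (∏ i : Fin n, (x i + y i)) *
      (∏ p ∈ Finset.univ.filter (fun p : Fin n × Fin n => p.1 < p.2),
          ((x p.1 + y p.2) / (x p.1 - x p.2))) *
      Matrix.det (Matrix.of fun i j : Fin n =>
        (∏ k ∈ Finset.Icc 1 (n - (j.val + 1)), (x i - a k)) /
        (∏ k ∈ Finset.Icc 1 (n - j.val), (1 - b k * x i))) *
      (∏ i : Fin n, ∏ j : Fin n, (1 - b (j.val + 1) * x i)) =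
    (∏ i : Fin n, (x i + y i)) *
      (∏ p ∈ Finset.univ.filter (fun p : Fin n × Fin n => p.1 < p.2),
          ((x p.1 + y p.2) * (1 - a (p.1.val + 1) * b (p.2.val + 1)))) := by
  have hclear : Matrix.det (Matrix.of fun i j : Fin n =>
        (∏ k ∈ Finset.Icc 1 (n - (j.val + 1)), (x i - a k)) /
        (∏ k ∈ Finset.Icc 1 (n - j.val), (1 - b k * x i))) *
      (∏ i : Fin n, ∏ j : Fin n, (1 - b (j.val + 1) * x i)) =
      (of fun i (j : Fin n) => domainWallColumn a b n 0 j.rev (x i)).det := by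
    rw [mul_comm, ← det_mul_column]
    congr 1
    ext i j
    simp only [of_apply]
    rw [prod_fin_add_one_eq_prod_Icc n fun k => 1 - b k * x i, mul_comm, Fin.val_rev,
      show n - j = n - (j + 1) + 1 by omega]
    exact div_mul_prod_eq_domainWallColumn a b (by omega) (hb i)
  have hcancel : ∀ p ∈ univ.filter (fun p : Fin n × Fin n => p.1 < p.2),
      (x p.1 + y p.2) / (x p.1 - x p.2) * (x p.1 - x p.2) = x p.1 + y p.2 := fun p hp =>
    div_mul_cancel₀ _ (sub_ne_zero.mpr (hx _ _ (mem_filter.mp hp).2.ne))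
  rw [mul_assoc _ (det _), hclear, det_domainWallColumn_rev, prod_mul_distrib]
  calc _ = (∏ i : Fin n, (x i + y i)) *
        (∏ p ∈ univ.filter (fun p : Fin n × Fin n => p.1 < p.2),
          (x p.1 + y p.2) / (x p.1 - x p.2) * (x p.1 - x p.2)) *
        ∏ p ∈ univ.filter (fun p : Fin n × Fin n => p.1 < p.2),
          (1 - a (p.1.val + 1) * b (p.2.val + 1)) := by
        rw [prod_mul_distrib]; ring
    _ = _ := by rw [prod_congr rfl hcancel, mul_assoc]
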